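/- Let (E, ‖·‖) be a complete random uniformly convex RN module, G an a.s. bounded closed L⁰-convex subset of E, and T : G → G nonexpansive. Then T has a fixed point. Moreover, the same conclusion holds if G is only assumed closed and L⁰-convex while T(G) is a.s. bounded. -/

import Mathlib

open MeasureTheory Filter Function Set

/-- A *random normed module* over `ℝ` with base `(Ω, F, μ)`, encoded concretely: `E` is a
module over the ring `Ω → ℝ` of (pointwise) random variables, together with an `L⁰`-norm
`rnorm : E → Ω → ℝ` satisfying the RN-module axioms almost everywhere. -/
structure RNModule (Ω : Type*) [MeasurableSpace Ω] (μ : Measure Ω) (E : Type*)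
    [AddCommGroup E] [Module (Ω → ℝ) E] where
  rnorm : E → Ω → ℝ
  measurable_rnorm : ∀ x, Measurable (rnorm x)
  rnorm_nonneg : ∀ x, ∀ᵐ ω ∂μ, 0 ≤ rnorm x ω
  rnorm_eq_zero : ∀ x, rnorm x =ᵐ[μ] 0 → x = 0
  rnorm_smul : ∀ ξ : Ω → ℝ, Measurable ξ → ∀ x,
    rnorm (ξ • x) =ᵐ[μ] fun ω => |ξ ω| * rnorm x ω
  rnorm_add : ∀ x y, ∀ᵐ ω ∂μ, rnorm (x + y) ω ≤ rnorm x ω + rnorm y ω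

namespace RNModule

variable {Ω E : Type*} [MeasurableSpace Ω] {μ : Measure Ω}
  [AddCommGroup E] [Module (Ω → ℝ) E]

/-- Convergence of a sequence in the `(ε,λ)`-topology, i.e. convergence in probability of
the `L⁰`-norm of the differences. -/
def TendstoInProb (N : RNModule Ω μ E) (f : ℕ → E) (x : E) : Prop :=
  ∀ ε : ℝ, 0 < ε →
    Tendsto (fun n => μ {ω | ε ≤ N.rnorm (f n - x) ω}) atTop (nhds 0)

/-- Cauchy sequences for the `(ε,λ)`-uniformity. -/
def CauchyInProb (N : RNModule Ω μ E) (f : ℕ → E) : Prop :=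
  ∀ ε : ℝ, 0 < ε → ∀ δ : ℝ, 0 < δ → ∃ K : ℕ, ∀ m ≥ K, ∀ n ≥ K,
    μ {ω | ε ≤ N.rnorm (f m - f n) ω} ≤ ENNReal.ofReal δ

/-- `𝒯_{ε,λ}`-completeness of a random normed module. -/
def Complete (N : RNModule Ω μ E) : Prop :=
  ∀ f : ℕ → E, N.CauchyInProb f → ∃ x : E, N.TendstoInProb f x

/-- A subset is `(ε,λ)`-closed iff it is sequentially closed (the topology is metrizable). -/
def IsClosedSet (N : RNModule Ω μ E) (G : Set E) : Prop :=
  ∀ (f : ℕ → E) (x : E), (∀ n, f n ∈ G) → N.TendstoInProb f x → x ∈ G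

end RNModule

/-- A countable measurable partition of `Ω`. -/
def MeasPartition {Ω : Type*} [MeasurableSpace Ω] (A : ℕ → Set Ω) : Prop :=
  (∀ n, MeasurableSet (A n)) ∧ Pairwise (Disjoint on A) ∧ (⋃ n, A n) = Set.univ

/-- The indicator of a measurable set, as an element of the ring `Ω → ℝ`. -/
noncomputable def indR {Ω : Type*} (A : Set Ω) : Ω → ℝ := A.indicator fun _ => (1 : ℝ)

namespace RNModule

variable {Ω E : Type*} [MeasurableSpace Ω] {μ : Measure Ω}
  [AddCommGroup E] [Module (Ω → ℝ) E]

/-- A subset `G` has the countable concatenation property (is *stable*): for every sequence in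
`G` and every countable measurable partition of `Ω`, some element of `G` agrees with `g n`
on `A n` for every `n`. -/
def StableSet (N : RNModule Ω μ E) (G : Set E) : Prop :=
  ∀ g : ℕ → E, (∀ n, g n ∈ G) → ∀ A : ℕ → Set Ω, MeasPartition A →
    ∃ x ∈ G, ∀ n, indR (A n) • x = indR (A n) • g n

/-- `L⁰`-convexity of a subset. -/
def L0Convex (N : RNModule Ω μ E) (G : Set E) : Prop :=
  ∀ x ∈ G, ∀ y ∈ G, ∀ ξ : Ω → ℝ, Measurable ξ →
    (∀ ω, 0 ≤ ξ ω) → (∀ ω, ξ ω ≤ 1) → ξ • x + (1 - ξ) • y ∈ G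

/-- A subset is a.s. bounded if its `L⁰`-norms admit a common `L⁰` upper bound. -/
def AeBounded (N : RNModule Ω μ E) (G : Set E) : Prop :=
  ∃ η : Ω → ℝ, Measurable η ∧ ∀ x ∈ G, ∀ᵐ ω ∂μ, N.rnorm x ω ≤ η ω

/-- `D` is the random diameter of `H`: the least a.e. upper bound of `{‖x−y‖ : x, y ∈ H}`. -/
def IsRandomDiam (N : RNModule Ω μ E) (H : Set E) (D : Ω → ℝ) : Prop :=
  Measurable D ∧
  (∀ x ∈ H, ∀ y ∈ H, ∀ᵐ ω ∂μ, N.rnorm (x - y) ω ≤ D ω) ∧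
  (∀ D' : Ω → ℝ, Measurable D' →
    (∀ x ∈ H, ∀ y ∈ H, ∀ᵐ ω ∂μ, N.rnorm (x - y) ω ≤ D' ω) → ∀ᵐ ω ∂μ, D ω ≤ D' ω)

/-- Random normal structure of a closed `L⁰`-convex set `G`: every nonempty a.s. bounded closed
`L⁰`-convex subset `H` of `G` with random diameter `D(H) > 0` somewhere admits a point `h`
whose random radius is `< D(H)` a.e. on `(D(H) > 0)`. -/
def RandomNormalStructure (N : RNModule Ω μ E) (G : Set E) : Prop :=
  ∀ H : Set E, H ⊆ G → H.Nonempty → N.IsClosedSet H → N.L0Convex H → N.AeBounded H →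
  ∀ D : Ω → ℝ, N.IsRandomDiam H D → 0 < μ {ω | 0 < D ω} →
  ∃ h ∈ H, ∃ r : Ω → ℝ, Measurable r ∧
    (∀ x ∈ H, ∀ᵐ ω ∂μ, N.rnorm (h - x) ω ≤ r ω) ∧
    (∀ᵐ ω ∂μ, 0 < D ω → r ω < D ω)

/-- `E` has full support: on every set of positive measure the norms of elements of `E` are
essentially unbounded. -/
def FullSupport (N : RNModule Ω μ E) : Prop :=
  ∀ A : Set Ω, MeasurableSet A → 0 < μ A → ∀ η : Ω → ℝ, Measurable η →
    ∃ x : E, 0 < μ {ω ∈ A | η ω < N.rnorm x ω}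

/-- Random uniform convexity of a random normed module. -/
def RandomUniformlyConvex (N : RNModule Ω μ E) : Prop :=
  ∀ ε : Ω → ℝ, Measurable ε → (∃ l : ℝ, 0 < l ∧ ∀ᵐ ω ∂μ, l ≤ ε ω ∧ ε ω ≤ 2) →
  ∃ δ : Ω → ℝ, Measurable δ ∧ (∃ c : ℝ, 0 < c ∧ ∀ᵐ ω ∂μ, c ≤ δ ω ∧ δ ω ≤ 1) ∧
    ∀ x y : E, (∀ᵐ ω ∂μ, N.rnorm x ω ≤ 1) → (∀ᵐ ω ∂μ, N.rnorm y ω ≤ 1) →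
    ∀ D : Set Ω, MeasurableSet D → 0 < μ D →
    (∀ᵐ ω ∂μ, ω ∈ D → 0 < N.rnorm x ω ∧ 0 < N.rnorm y ω ∧ 0 < N.rnorm (x - y) ω) →
    (∀ᵐ ω ∂μ, ω ∈ D → ε ω ≤ N.rnorm (x - y) ω) →
    ∀ᵐ ω ∂μ, ω ∈ D → N.rnorm (x + y) ω ≤ 2 * (1 - δ ω)

/-- `L⁰`-convex compactness: every nonempty family of closed `L⁰`-convex subsets of `G`
with the finite intersection property has nonempty intersection. -/
def L0ConvexCompact (N : RNModule Ω μ E) (G : Set E) : Prop :=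
  ∀ 𝒞 : Set (Set E), 𝒞.Nonempty →
    (∀ C ∈ 𝒞, C ⊆ G ∧ N.IsClosedSet C ∧ N.L0Convex C) →
    (∀ 𝒮 : Finset (Set E), ↑𝒮 ⊆ 𝒞 → 𝒮.Nonempty → (⋂ C ∈ 𝒮, C).Nonempty) →
    (⋂₀ 𝒞).Nonempty

end RNModule


section LimsupHelpers

open ENNReal

lemma mylimsup_le_add {u v : ℕ → ℝ≥0∞} {a : ℝ≥0∞}
    (h : ∀ᶠ n in atTop, u n ≤ a + v n) :
    limsup u atTop ≤ a + limsup v atTop := by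
  refine ENNReal.le_of_forall_pos_le_add fun ε hε hlt => ?_
  have hV : limsup v atTop ≠ ⊤ := by
    intro htop
    rw [htop] at hlt
    simp [add_top] at hlt
  have hev : ∀ᶠ n in atTop, v n < limsup v atTop + ε :=
    eventually_lt_of_limsup_lt (ENNReal.lt_add_right hV (by exact_mod_cast hε.ne'))
  have : ∀ᶠ n in atTop, u n ≤ a + limsup v atTop + ε := by
    filter_upwards [h, hev] with n h1 h2
    calc u n ≤ a + v n := h1
    _ ≤ a + (limsup v atTop + ε) := add_le_add le_rfl h2.le
    _ = a + limsup v atTop + ε := (add_assoc _ _ _).symm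
  exact limsup_le_of_le (by isBoundedDefault) this

lemma mylimsup_add_le (u v : ℕ → ℝ≥0∞) :
    limsup (fun n => u n + v n) atTop ≤ limsup u atTop + limsup v atTop := by
  refine ENNReal.le_of_forall_pos_le_add fun ε hε hlt => ?_
  have hU : limsup u atTop ≠ ⊤ := fun htop => by simp [htop, top_add] at hlt
  have hV : limsup v atTop ≠ ⊤ := fun htop => by simp [htop, add_top] at hlt
  have hε2 : ((ε : ℝ≥0∞)/2) ≠ 0 := (ENNReal.half_pos (by exact_mod_cast hε.ne')).ne'
  have hu : ∀ᶠ n in atTop, u n < limsup u atTop + ε/2 :=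
    eventually_lt_of_limsup_lt (ENNReal.lt_add_right hU hε2)
  have hv : ∀ᶠ n in atTop, v n < limsup v atTop + ε/2 :=
    eventually_lt_of_limsup_lt (ENNReal.lt_add_right hV hε2)
  refine limsup_le_of_le (by isBoundedDefault) ?_
  filter_upwards [hu, hv] with n h1 h2
  calc u n + v n ≤ (limsup u atTop + ε/2) + (limsup v atTop + ε/2) :=
        add_le_add h1.le h2.le
  _ = limsup u atTop + limsup v atTop + (ε/2 + ε/2) := by ring
  _ = limsup u atTop + limsup v atTop + ε := by rw [ENNReal.add_halves]

lemma mylimsup_sup_le (u v : ℕ → ℝ≥0∞) :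
    limsup (fun n => u n ⊔ v n) atTop ≤ limsup u atTop ⊔ limsup v atTop := by
  rw [limsup_max]

lemma mylimsup_const_mul {a : ℝ≥0∞} (ha : a ≠ ⊤) (u : ℕ → ℝ≥0∞) :
    limsup (fun n => a * u n) atTop = a * limsup u atTop :=
  ENNReal.limsup_const_mul_of_ne_top ha

end LimsupHelpers
open scoped ENNReal

namespace RNModule

variable {Ω E : Type*} [MeasurableSpace Ω] {μ : Measure Ω}
  [AddCommGroup E] [Module (Ω → ℝ) E]

/-- The `ℝ≥0∞`-valued norm. -/
noncomputable def nrm (N : RNModule Ω μ E) (x : E) : Ω → ℝ≥0∞ :=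
  fun ω => ENNReal.ofReal (N.rnorm x ω)

lemma measurable_nrm (N : RNModule Ω μ E) (x : E) : Measurable (N.nrm x) :=
  (N.measurable_rnorm x).ennreal_ofReal

lemma nrm_add_le (N : RNModule Ω μ E) (x y : E) :
    ∀ᵐ ω ∂μ, N.nrm (x + y) ω ≤ N.nrm x ω + N.nrm y ω := by
  filter_upwards [N.rnorm_add x y] with ω h
  exact le_trans (ENNReal.ofReal_le_ofReal h) ENNReal.ofReal_add_le

lemma rnorm_neg (N : RNModule Ω μ E) (x : E) :
    N.rnorm (-x) =ᵐ[μ] N.rnorm x := by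
  have h := N.rnorm_smul (fun _ => (-1 : ℝ)) measurable_const x
  have hc : ((fun _ => (-1 : ℝ)) : Ω → ℝ) = (-1 : Ω → ℝ) := rfl
  have hx : ((fun _ => (-1 : ℝ)) : Ω → ℝ) • x = -x := by
    rw [hc]; exact neg_one_smul _ x
  rw [hx] at h
  filter_upwards [h] with ω hω
  simpa using hω

lemma nrm_neg (N : RNModule Ω μ E) (x : E) : N.nrm (-x) =ᵐ[μ] N.nrm x := by
  filter_upwards [N.rnorm_neg x] with ω h
  simp only [nrm, h]

lemma nrm_sub_comm (N : RNModule Ω μ E) (x y : E) :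
    N.nrm (x - y) =ᵐ[μ] N.nrm (y - x) := by
  have := N.nrm_neg (y - x)
  rw [neg_sub] at this
  exact this

lemma rnorm_sub_comm (N : RNModule Ω μ E) (x y : E) :
    N.rnorm (x - y) =ᵐ[μ] N.rnorm (y - x) := by
  have := N.rnorm_neg (y - x)
  rw [neg_sub] at this
  exact this

lemma nrm_triangle (N : RNModule Ω μ E) (x y z : E) :
    ∀ᵐ ω ∂μ, N.nrm (x - z) ω ≤ N.nrm (x - y) ω + N.nrm (y - z) ω := by
  have h := N.nrm_add_le (x - y) (y - z)
  rw [sub_add_sub_cancel] at h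
  exact h

lemma rnorm_triangle (N : RNModule Ω μ E) (x y z : E) :
    ∀ᵐ ω ∂μ, N.rnorm (x - z) ω ≤ N.rnorm (x - y) ω + N.rnorm (y - z) ω := by
  have h := N.rnorm_add (x - y) (y - z)
  rw [sub_add_sub_cancel] at h
  exact h

lemma rnorm_zero (N : RNModule Ω μ E) : N.rnorm (0 : E) =ᵐ[μ] 0 := by
  have h := N.rnorm_smul (fun _ => (0 : ℝ)) measurable_const (0 : E)
  have hc : ((fun _ => (0 : ℝ)) : Ω → ℝ) = (0 : Ω → ℝ) := rfl
  have hx : ((fun _ => (0 : ℝ)) : Ω → ℝ) • (0 : E) = (0 : E) := by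
    rw [hc]; exact zero_smul _ _
  rw [hx] at h
  filter_upwards [h] with ω hω
  simpa using hω

/-- `rnorm` of a constant scalar multiple. -/
lemma rnorm_const_smul (N : RNModule Ω μ E) (a : ℝ) (x : E) :
    N.rnorm ((fun _ => a : Ω → ℝ) • x) =ᵐ[μ] fun ω => |a| * N.rnorm x ω :=
  N.rnorm_smul _ measurable_const x

end RNModule
namespace RNModule

variable {Ω E : Type*} [MeasurableSpace Ω] {μ : Measure Ω}
  [AddCommGroup E] [Module (Ω → ℝ) E]

lemma tendstoInProb_unique (N : RNModule Ω μ E) {f : ℕ → E} {x x' : E}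
    (h : N.TendstoInProb f x) (h' : N.TendstoInProb f x') : x = x' := by
  have key : ∀ s : ℝ, 0 < s → μ {ω | s ≤ N.rnorm (x - x') ω} = 0 := by
    intro s hs
    have hb : ∀ n : ℕ, μ {ω | s ≤ N.rnorm (x - x') ω} ≤
        μ {ω | s/2 ≤ N.rnorm (f n - x) ω} + μ {ω | s/2 ≤ N.rnorm (f n - x') ω} := by
      intro n
      have hae : {ω | s ≤ N.rnorm (x - x') ω} ≤ᵐ[μ]
          ({ω | s/2 ≤ N.rnorm (f n - x) ω} ∪ {ω | s/2 ≤ N.rnorm (f n - x') ω} : Set Ω) := by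
        filter_upwards [N.rnorm_triangle x (f n) x', N.rnorm_sub_comm x (f n)] with ω h1 h2
        intro hle
        have hle' : s ≤ N.rnorm (x - x') ω := hle
        rw [h2] at h1
        by_cases hc1 : s/2 ≤ N.rnorm (f n - x) ω
        · exact Set.mem_union_left _ hc1
        · refine Set.mem_union_right _ ?_
          push_neg at hc1
          show s/2 ≤ N.rnorm (f n - x') ω
          linarith
      calc μ {ω | s ≤ N.rnorm (x - x') ω}
          ≤ μ ({ω | s/2 ≤ N.rnorm (f n - x) ω} ∪ {ω | s/2 ≤ N.rnorm (f n - x') ω}) :=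
            measure_mono_ae hae
        _ ≤ _ := measure_union_le _ _
    have htend : Tendsto (fun n => μ {ω | s/2 ≤ N.rnorm (f n - x) ω} +
        μ {ω | s/2 ≤ N.rnorm (f n - x') ω}) atTop (nhds 0) := by
      have := (h (s/2) (by linarith)).add (h' (s/2) (by linarith))
      rw [add_zero] at this
      exact this
    exact le_antisymm (ge_of_tendsto htend (Eventually.of_forall hb)) (zero_le)
  have h0 : N.rnorm (x - x') =ᵐ[μ] 0 := by
    have hnull : μ {ω | 0 < N.rnorm (x - x') ω} = 0 := by
      have hsub : {ω | 0 < N.rnorm (x - x') ω} ⊆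
          ⋃ n : ℕ, {ω | 1/((n:ℝ)+1) ≤ N.rnorm (x - x') ω} := by
        intro ω hω
        obtain ⟨n, hn⟩ := exists_nat_one_div_lt (show (0:ℝ) < N.rnorm (x - x') ω from hω)
        exact Set.mem_iUnion.2 ⟨n, hn.le⟩
      exact measure_mono_null hsub (measure_iUnion_null fun n => key _ (by positivity))
    have hae : ∀ᵐ ω ∂μ, ¬ (0 < N.rnorm (x - x') ω) := by
      rw [ae_iff]; simpa using hnull
    filter_upwards [hae, N.rnorm_nonneg (x - x')] with ω a b
    simp only [Pi.zero_apply]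
    linarith [not_lt.1 a]
  exact sub_eq_zero.1 (N.rnorm_eq_zero _ h0)

lemma exists_fixedPoint_of_contraction (N : RNModule Ω μ E) [IsFiniteMeasure μ]
    (hcomp : N.Complete) {G : Set E} (hGc : N.IsClosedSet G) {S : E → E}
    (hSG : ∀ x ∈ G, S x ∈ G) {x₀ : E} (hx₀ : x₀ ∈ G) {t : ℝ} (ht0 : 0 < t) (ht1 : t < 1)
    (hcontr : ∀ x ∈ G, ∀ y ∈ G, ∀ᵐ ω ∂μ, N.rnorm (S x - S y) ω ≤ t * N.rnorm (x - y) ω) :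
    ∃ z ∈ G, S z = z := by
  set z : ℕ → E := fun n => S^[n] x₀ with hz
  have hzG : ∀ n, z n ∈ G := by
    intro n
    induction n with
    | zero => simpa [hz] using hx₀
    | succ n ih =>
      show S^[n+1] x₀ ∈ G
      rw [Function.iterate_succ_apply']
      exact hSG _ ih
  have hzsucc : ∀ n, z (n+1) = S (z n) := fun n => Function.iterate_succ_apply' S n x₀
  set M : Ω → ℝ := N.rnorm (z 1 - z 0) with hM
  have hMmeas : Measurable M := N.measurable_rnorm _
  have hstep : ∀ n, ∀ᵐ ω ∂μ, N.rnorm (z (n+1) - z n) ω ≤ t^n * M ω := by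
    intro n
    induction n with
    | zero => exact Eventually.of_forall fun ω => by simp [hM]
    | succ n ih =>
      filter_upwards [hcontr (z (n+1)) (hzG _) (z n) (hzG _), ih] with ω h1 h2
      have : N.rnorm (z (n+2) - z (n+1)) ω ≤ t * N.rnorm (z (n+1) - z n) ω := by
        rw [hzsucc (n+1), hzsucc n] at *
        exact h1
      calc N.rnorm (z (n+2) - z (n+1)) ω ≤ t * N.rnorm (z (n+1) - z n) ω := this
        _ ≤ t * (t^n * M ω) := by nlinarith
        _ = t^(n+1) * M ω := by ring
  have hW : ∀ᵐ ω ∂μ, (∀ n, N.rnorm (z (n+1) - z n) ω ≤ t^n * M ω) ∧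
      (∀ a b c, N.rnorm (z a - z c) ω ≤ N.rnorm (z a - z b) ω + N.rnorm (z b - z c) ω) ∧
      (∀ a b, N.rnorm (z a - z b) ω = N.rnorm (z b - z a) ω) ∧
      (N.rnorm (0:E) ω = 0) ∧ (0 ≤ M ω) := by
    refine (ae_all_iff.2 hstep).and (((ae_all_iff.2 fun a => ae_all_iff.2 fun b =>
      ae_all_iff.2 fun c => N.rnorm_triangle (z a) (z b) (z c)).and
      ((ae_all_iff.2 fun a => ae_all_iff.2 fun b => N.rnorm_sub_comm (z a) (z b)).and
      ((N.rnorm_zero).and (N.rnorm_nonneg _)))))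
  have hgeom : ∀ᵐ ω ∂μ, ∀ n d, N.rnorm (z (n+d) - z n) ω ≤ t^n / (1-t) * M ω := by
    filter_upwards [hW] with ω ⟨w1, w2, w3, w4, w5⟩
    intro n d
    have hsum : N.rnorm (z (n+d) - z n) ω ≤ (∑ j ∈ Finset.range d, t^(n+j)) * M ω := by
      induction d with
      | zero => simpa [w4] using by positivity
      | succ d ih =>
        calc N.rnorm (z (n+d+1) - z n) ω
            ≤ N.rnorm (z (n+d+1) - z (n+d)) ω + N.rnorm (z (n+d) - z n) ω := w2 _ _ _
          _ ≤ t^(n+d) * M ω + (∑ j ∈ Finset.range d, t^(n+j)) * M ω := add_le_add (w1 _) ih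
          _ = (∑ j ∈ Finset.range (d+1), t^(n+j)) * M ω := by
              rw [Finset.sum_range_succ]; ring
    refine hsum.trans ?_
    have hgs : (∑ j ∈ Finset.range d, t^(n+j)) ≤ t^n / (1-t) := by
      have h1 : (∑ j ∈ Finset.range d, t^(n+j)) = t^n * ∑ j ∈ Finset.range d, t^j := by
        rw [Finset.mul_sum]; exact Finset.sum_congr rfl fun j _ => (pow_add t n j)
      have h2 : (∑ j ∈ Finset.range d, t^j) ≤ 1/(1-t) := by
        rw [geom_sum_eq ht1.ne]
        rw [show (t^d - 1)/(t-1) = (1 - t^d)/(1-t) by rw [← neg_div_neg_eq]; ring_nf]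
        have hpos : (0:ℝ) < 1 - t := by linarith
        rw [div_le_div_iff₀ hpos hpos]
        nlinarith [pow_nonneg ht0.le d]
      calc (∑ j ∈ Finset.range d, t^(n+j)) = t^n * ∑ j ∈ Finset.range d, t^j := h1
        _ ≤ t^n * (1/(1-t)) := by nlinarith [pow_nonneg ht0.le n]
        _ = t^n / (1-t) := by ring
    nlinarith [pow_nonneg ht0.le n]
  -- the sequence is Cauchy in probability
  have hcauchy : N.CauchyInProb z := by
    intro ε hε δ hδ
    set c : ℝ := ε * (1 - t) with hc
    have hcpos : 0 < c := mul_pos hε (by linarith)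
    set Sk : ℕ → Set Ω := fun K => {ω | c ≤ t^K * M ω} with hSk
    have hSkm : ∀ K, MeasurableSet (Sk K) :=
      fun K => measurableSet_le measurable_const (hMmeas.const_mul _)
    have hSkanti : Antitone Sk := by
      intro K K' hKK' ω hω
      have h1 : c ≤ t^K' * M ω := hω
      have hMpos : 0 < M ω := by
        by_contra hM0
        push_neg at hM0
        nlinarith [pow_pos ht0 K']
      have : t^K' ≤ t^K := pow_le_pow_of_le_one ht0.le ht1.le hKK'
      show c ≤ t^K * M ω
      nlinarith
    have hempty : (⋂ K, Sk K) = ∅ := by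
      ext ω
      simp only [Set.mem_iInter, Set.mem_empty_iff_false, iff_false]
      intro hall
      have htend : Tendsto (fun K => t^K * M ω) atTop (nhds 0) := by
        have := (tendsto_pow_atTop_nhds_zero_of_lt_one ht0.le ht1).mul_const (M ω)
        simpa using this
      have : c ≤ 0 := ge_of_tendsto htend (Eventually.of_forall fun K => hall K)
      linarith
    have hμtend : Tendsto (fun K => μ (Sk K)) atTop (nhds 0) := by
      have := tendsto_measure_iInter_atTop (fun K => (hSkm K).nullMeasurableSet)
        hSkanti ⟨0, measure_ne_top μ _⟩
      rw [hempty, measure_empty] at this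
      exact this
    have hKex : ∃ K, μ (Sk K) ≤ ENNReal.ofReal δ := by
      obtain ⟨K, hK⟩ := (hμtend.eventually_lt_const (ENNReal.ofReal_pos.2 hδ)).exists
      exact ⟨K, hK.le⟩
    obtain ⟨K, hK⟩ := hKex
    refine ⟨K, fun m hm n hn => ?_⟩
    refine le_trans ?_ hK
    have hae : ∀ᵐ ω ∂μ, ω ∈ {ω | ε ≤ N.rnorm (z m - z n) ω} → ω ∈ Sk K := by
      filter_upwards [hgeom, hW] with ω hg ⟨w1, w2, w3, w4, w5⟩
      intro hle
      have hle' : ε ≤ N.rnorm (z m - z n) ω := hle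
      have key : ε ≤ t^K / (1-t) * M ω := by
        have h1t : (0:ℝ) < 1 - t := by linarith
        rcases le_total n m with hnm | hmn
        · obtain ⟨d, rfl⟩ := Nat.exists_eq_add_of_le hnm
          refine hle'.trans ((hg n d).trans ?_)
          have hpw : t^n ≤ t^K := pow_le_pow_of_le_one ht0.le ht1.le hn
          have hdiv : t^n / (1-t) ≤ t^K / (1-t) := by
            rw [div_le_div_iff₀ h1t h1t]; nlinarith
          exact mul_le_mul_of_nonneg_right hdiv w5
        · obtain ⟨d, rfl⟩ := Nat.exists_eq_add_of_le hmn
          rw [w3 m (m+d)] at hle'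
          refine hle'.trans ((hg m d).trans ?_)
          have hpw : t^m ≤ t^K := pow_le_pow_of_le_one ht0.le ht1.le hm
          have hdiv : t^m / (1-t) ≤ t^K / (1-t) := by
            rw [div_le_div_iff₀ h1t h1t]; nlinarith
          exact mul_le_mul_of_nonneg_right hdiv w5
      show c ≤ t^K * M ω
      have h1t : (0:ℝ) < 1 - t := by linarith
      calc c = ε * (1-t) := rfl
        _ ≤ (t^K / (1-t) * M ω) * (1-t) := by nlinarith
        _ = t^K * M ω := by field_simp
    exact measure_mono_ae hae
  obtain ⟨zlim, hlim⟩ := hcomp z hcauchy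
  have hzlimG : zlim ∈ G := hGc z zlim hzG hlim
  refine ⟨zlim, hzlimG, ?_⟩
  have h1 : N.TendstoInProb (fun n => z (n+1)) zlim := by
    intro ε hε
    exact (hlim ε hε).comp (tendsto_add_atTop_nat 1)
  have h2 : N.TendstoInProb (fun n => z (n+1)) (S zlim) := by
    intro ε hε
    have hb : ∀ n, μ {ω | ε ≤ N.rnorm (z (n+1) - S zlim) ω} ≤
        μ {ω | ε ≤ N.rnorm (z n - zlim) ω} := by
      intro n
      have hae : ∀ᵐ ω ∂μ, ω ∈ {ω | ε ≤ N.rnorm (z (n+1) - S zlim) ω} →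
          ω ∈ {ω | ε ≤ N.rnorm (z n - zlim) ω} := by
        filter_upwards [hcontr (z n) (hzG n) zlim hzlimG, N.rnorm_nonneg (z n - zlim)] with ω hω hnn
        intro hle
        have hle' : ε ≤ N.rnorm (z (n+1) - S zlim) ω := hle
        rw [hzsucc n] at hle'
        show ε ≤ N.rnorm (z n - zlim) ω
        nlinarith
      exact measure_mono_ae hae
    exact tendsto_of_tendsto_of_tendsto_of_le_of_le tendsto_const_nhds (hlim ε hε)
      (fun n => zero_le) hb
  exact N.tendstoInProb_unique h2 h1

end RNModule
namespace RNModule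

variable {Ω E : Type*} [MeasurableSpace Ω] {μ : Measure Ω}
  [AddCommGroup E] [Module (Ω → ℝ) E]

/-- Quantitative two-point estimate extracted from random uniform convexity. -/
lemma uc_pair (N : RNModule Ω μ E) (hruc : N.RandomUniformlyConvex)
    {ε₀ C : ℝ} (hε : 0 < ε₀) (hC : 0 < C) :
    ∃ c : ℝ, 0 < c ∧ c ≤ 1/2 ∧ ∀ (a b : E) (R : Ω → ℝ), Measurable R →
      (∀ ω, ε₀/2 ≤ R ω) →
      (∀ ω, N.rnorm a ω ≤ R ω) → (∀ ω, N.rnorm b ω ≤ R ω) →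
      ∀ D : Set Ω, MeasurableSet D →
      (∀ᵐ ω ∂μ, ω ∈ D → ε₀ ≤ N.rnorm (a - b) ω ∧ R ω ≤ C) →
      ∀ᵐ ω ∂μ, ω ∈ D → N.rnorm (a + b) ω ≤ 2 * (1 - c) * R ω := by
  set C' : ℝ := max C (ε₀/2) with hC'
  have hC'pos : 0 < C' := lt_of_lt_of_le hC (le_max_left _ _)
  set l : ℝ := min (ε₀ / C') 2 with hl
  have hlpos : 0 < l := lt_min (div_pos hε hC'pos) (by norm_num)
  obtain ⟨δ, hδmeas, ⟨c₀, hc₀pos, hc₀⟩, hkey⟩ :=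
    hruc (fun _ => l) measurable_const ⟨l, hlpos,
      Eventually.of_forall fun ω => ⟨le_refl l, min_le_right _ _⟩⟩
  refine ⟨min c₀ (1/2), lt_min hc₀pos (by norm_num), min_le_right _ _, ?_⟩
  intro a b R hRmeas hRfloor hRa hRb D hD hDcond
  set c : ℝ := min c₀ (1/2) with hcdef
  have hRpos : ∀ ω, 0 < R ω := fun ω => lt_of_lt_of_le (by linarith) (hRfloor ω)
  set ξ : Ω → ℝ := fun ω => (R ω)⁻¹ with hξ
  have hξmeas : Measurable ξ := hRmeas.inv
  set x := ξ • a with hxd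
  set y := ξ • b with hyd
  have hxnorm : N.rnorm x =ᵐ[μ] fun ω => (R ω)⁻¹ * N.rnorm a ω := by
    filter_upwards [N.rnorm_smul ξ hξmeas a] with ω h
    rw [h]
    simp [hξ, abs_of_pos (inv_pos.2 (hRpos ω))]
  have hynorm : N.rnorm y =ᵐ[μ] fun ω => (R ω)⁻¹ * N.rnorm b ω := by
    filter_upwards [N.rnorm_smul ξ hξmeas b] with ω h
    rw [h]
    simp [hξ, abs_of_pos (inv_pos.2 (hRpos ω))]
  have hxy : x - y = ξ • (a - b) := (smul_sub ξ a b).symm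
  have hxynorm : N.rnorm (x - y) =ᵐ[μ] fun ω => (R ω)⁻¹ * N.rnorm (a - b) ω := by
    rw [hxy]
    filter_upwards [N.rnorm_smul ξ hξmeas (a - b)] with ω h
    rw [h]
    simp [hξ, abs_of_pos (inv_pos.2 (hRpos ω))]
  have hx1 : ∀ᵐ ω ∂μ, N.rnorm x ω ≤ 1 := by
    filter_upwards [hxnorm] with ω h
    rw [h]
    rw [inv_mul_le_iff₀ (hRpos ω), mul_one]
    exact hRa ω
  have hy1 : ∀ᵐ ω ∂μ, N.rnorm y ω ≤ 1 := by
    filter_upwards [hynorm] with ω h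
    rw [h]
    rw [inv_mul_le_iff₀ (hRpos ω), mul_one]
    exact hRb ω
  set Dplus : Set Ω := D ∩ {ω | 0 < N.rnorm x ω} ∩ {ω | 0 < N.rnorm y ω} with hDplus
  have hDplusm : MeasurableSet Dplus :=
    (hD.inter (measurableSet_lt measurable_const (N.measurable_rnorm x))).inter
      (measurableSet_lt measurable_const (N.measurable_rnorm y))
  have hcore : ∀ᵐ ω ∂μ, ω ∈ Dplus → N.rnorm (x + y) ω ≤ 2 * (1 - c₀) := by
    by_cases hμD : μ Dplus = 0
    · rw [ae_iff]
      refine measure_mono_null ?_ hμD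
      intro ω hω
      simp only [Set.mem_setOf_eq, Classical.not_imp] at hω
      exact hω.1
    · have hμDpos : 0 < μ Dplus := pos_iff_ne_zero.2 hμD
      have hpos : ∀ᵐ ω ∂μ, ω ∈ Dplus →
          0 < N.rnorm x ω ∧ 0 < N.rnorm y ω ∧ 0 < N.rnorm (x - y) ω := by
        filter_upwards [hxynorm, hDcond] with ω h1 h2
        intro hω
        obtain ⟨⟨hωD, hωx⟩, hωy⟩ := hω
        refine ⟨hωx, hωy, ?_⟩
        rw [h1]
        have := (h2 hωD).1
        exact mul_pos (inv_pos.2 (hRpos ω)) (by linarith)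
      have heps : ∀ᵐ ω ∂μ, ω ∈ Dplus → (fun _ => l) ω ≤ N.rnorm (x - y) ω := by
        filter_upwards [hxynorm, hDcond] with ω h1 h2
        intro hω
        obtain ⟨⟨hωD, _⟩, _⟩ := hω
        obtain ⟨hab, hRC⟩ := h2 hωD
        rw [h1]
        have hRC' : R ω ≤ C' := le_trans hRC (le_max_left _ _)
        have h3 : ε₀ / C' ≤ ε₀ / R ω := by
          rw [div_le_div_iff₀ hC'pos (hRpos ω)]
          nlinarith
        have h4 : ε₀ / R ω ≤ (R ω)⁻¹ * N.rnorm (a - b) ω := by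
          rw [div_eq_inv_mul]
          exact mul_le_mul_of_nonneg_left hab (inv_pos.2 (hRpos ω)).le
        exact le_trans (min_le_left _ _) (le_trans h3 h4)
      filter_upwards [hkey x y hx1 hy1 Dplus hDplusm hμDpos hpos heps, hc₀] with ω h1 h2
      intro hω
      have := h1 hω
      nlinarith [h2.1]
  -- recover the conclusion for a, b
  have hab : a + b = R • (x + y) := by
    rw [smul_add, hxd, hyd, smul_smul, smul_smul]
    have hRξ : (R * ξ : Ω → ℝ) = 1 := by
      funext ω
      simp [hξ, mul_inv_cancel₀ (hRpos ω).ne']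
    rw [hRξ, one_smul, one_smul]
  have habnorm : N.rnorm (a + b) =ᵐ[μ] fun ω => R ω * N.rnorm (x + y) ω := by
    rw [hab]
    filter_upwards [N.rnorm_smul R hRmeas (x + y)] with ω h
    rw [h, abs_of_pos (hRpos ω)]
  filter_upwards [hcore, habnorm, hxnorm, hynorm, N.rnorm_nonneg a, N.rnorm_nonneg b,
    N.rnorm_add x y] with ω h1 h2 h3 h4 h5 h6 h7
  intro hωD
  by_cases hmem : ω ∈ Dplus
  · have := h1 hmem
    rw [h2]
    have hc' : c ≤ c₀ := min_le_left _ _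
    nlinarith [hRpos ω]
  · -- some of the two norms vanishes
    have hc2 : c ≤ 1/2 := min_le_right _ _
    have hzero : N.rnorm a ω = 0 ∨ N.rnorm b ω = 0 := by
      by_contra hcon
      push_neg at hcon
      apply hmem
      refine ⟨⟨hωD, ?_⟩, ?_⟩
      · show 0 < N.rnorm x ω
        rw [h3]
        exact mul_pos (inv_pos.2 (hRpos ω)) (lt_of_le_of_ne h5 (Ne.symm hcon.1))
      · show 0 < N.rnorm y ω
        rw [h4]
        exact mul_pos (inv_pos.2 (hRpos ω)) (lt_of_le_of_ne h6 (Ne.symm hcon.2))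
    rw [h2]
    have h8 : N.rnorm (x + y) ω ≤ (R ω)⁻¹ * N.rnorm a ω + (R ω)⁻¹ * N.rnorm b ω := by
      rw [← h3, ← h4]; exact h7
    rcases hzero with h0 | h0
    · have : N.rnorm (x + y) ω ≤ (R ω)⁻¹ * N.rnorm b ω := by
        rw [h0] at h8; simpa using h8
      have hb1 : (R ω)⁻¹ * N.rnorm b ω ≤ 1 := by
        rw [inv_mul_le_iff₀ (hRpos ω), mul_one]; exact hRb ω
      nlinarith [hRpos ω]
    · have : N.rnorm (x + y) ω ≤ (R ω)⁻¹ * N.rnorm a ω := by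
        rw [h0] at h8; simpa using h8
      have hb1 : (R ω)⁻¹ * N.rnorm a ω ≤ 1 := by
        rw [inv_mul_le_iff₀ (hRpos ω), mul_one]; exact hRa ω
      nlinarith [hRpos ω]

end RNModule
namespace RNModule

variable {Ω E : Type*} [MeasurableSpace Ω] {μ : Measure Ω}
  [AddCommGroup E] [Module (Ω → ℝ) E]

/-- Random asymptotic radius of `x` with respect to the sequence `y`. -/
noncomputable def asr (N : RNModule Ω μ E) (y : ℕ → E) (x : E) : Ω → ℝ≥0∞ :=
  fun ω => Filter.limsup (fun n => N.nrm (x - y n) ω) atTop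

lemma measurable_asr (N : RNModule Ω μ E) (y : ℕ → E) (x : E) :
    Measurable (N.asr y x) :=
  Measurable.limsup fun n => N.measurable_nrm (x - y n)

/-- Pasting two elements of `G` along the set where the first asymptotic radius
is smaller produces an element whose asymptotic radius is the pointwise min. -/
lemma paste (N : RNModule Ω μ E) {G : Set E} (hGconv : N.L0Convex G) (y : ℕ → E)
    {p q : E} (hp : p ∈ G) (hq : q ∈ G) :
    ∃ z ∈ G, ∀ᵐ ω ∂μ, N.asr y z ω = N.asr y p ω ⊓ N.asr y q ω := by
  set A : Set Ω := {ω | N.asr y p ω ≤ N.asr y q ω} with hA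
  have hAm : MeasurableSet A := measurableSet_le (N.measurable_asr y p) (N.measurable_asr y q)
  set ξ : Ω → ℝ := A.indicator (fun _ => 1) with hξ
  have hξmeas : Measurable ξ := (measurable_const (a := (1:ℝ))).indicator hAm
  have hξ0 : ∀ ω, 0 ≤ ξ ω := fun ω => Set.indicator_nonneg (fun _ _ => zero_le_one) ω
  have hξ1 : ∀ ω, ξ ω ≤ 1 := by
    intro ω
    by_cases h : ω ∈ A <;> simp [hξ, Set.indicator_of_mem, Set.indicator_of_notMem, h]
  set z : E := ξ • p + (1 - ξ) • q with hzdef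
  have hzG : z ∈ G := hGconv p hp q hq ξ hξmeas hξ0 hξ1
  refine ⟨z, hzG, ?_⟩
  have hzy : ∀ n, z - y n = ξ • (p - y n) + (1 - ξ) • (q - y n) := by
    intro n
    have h1 : ξ • y n + (1 - ξ) • y n = y n := by
      rw [← add_smul, show ξ + (1 - ξ) = (1 : Ω → ℝ) by ring, one_smul]
    rw [smul_sub, smul_sub, sub_add_sub_comm, h1]
  have hmulξ : ξ * ξ = ξ := by
    funext ω
    by_cases h : ω ∈ A <;>
      simp [hξ, Set.indicator_of_mem, Set.indicator_of_notMem, h]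
  have hmulξ' : ξ * (1 - ξ) = 0 := by
    funext ω
    by_cases h : ω ∈ A <;>
      simp [hξ, Set.indicator_of_mem, Set.indicator_of_notMem, h]
  have hcompl : (1 - ξ) * (1 - ξ) = 1 - ξ := by
    funext ω
    by_cases h : ω ∈ A <;>
      simp [hξ, Set.indicator_of_mem, Set.indicator_of_notMem, h]
  have hcompl' : (1 - ξ) * ξ = 0 := by
    rw [mul_comm]; exact hmulξ'
  have hzp : ∀ n, ξ • (z - y n) = ξ • (p - y n) := by
    intro n
    rw [hzy n, smul_add, smul_smul, smul_smul, hmulξ, hmulξ', zero_smul, add_zero]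
  have hzq : ∀ n, (1 - ξ) • (z - y n) = (1 - ξ) • (q - y n) := by
    intro n
    rw [hzy n, smul_add, smul_smul, smul_smul, hcompl, hcompl', zero_smul, zero_add]
  have hae : ∀ n, ∀ᵐ ω ∂μ, (ω ∈ A → N.rnorm (z - y n) ω = N.rnorm (p - y n) ω) ∧
      (ω ∉ A → N.rnorm (z - y n) ω = N.rnorm (q - y n) ω) := by
    intro n
    have e1 := N.rnorm_smul ξ hξmeas (z - y n)
    have e2 := N.rnorm_smul ξ hξmeas (p - y n)
    have e3 := N.rnorm_smul (1 - ξ) (measurable_const.sub hξmeas) (z - y n)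
    have e4 := N.rnorm_smul (1 - ξ) (measurable_const.sub hξmeas) (q - y n)
    rw [hzp n] at e1
    rw [hzq n] at e3
    filter_upwards [e1, e2, e3, e4] with ω h1 h2 h3 h4
    constructor
    · intro hωA
      have hv : ξ ω = 1 := Set.indicator_of_mem hωA _
      have := h1.symm.trans h2
      simpa [hv] using this
    · intro hωA
      have hv : ξ ω = 0 := Set.indicator_of_notMem hωA _
      have := h3.symm.trans h4
      have hv' : (1 - ξ) ω = 1 := by simp [hv, Pi.sub_apply]
      simpa [hv'] using this
  have hae' : ∀ᵐ ω ∂μ, ∀ n, (ω ∈ A → N.rnorm (z - y n) ω = N.rnorm (p - y n) ω) ∧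
      (ω ∉ A → N.rnorm (z - y n) ω = N.rnorm (q - y n) ω) := ae_all_iff.2 hae
  filter_upwards [hae'] with ω hω
  by_cases hmem : ω ∈ A
  · have heq : N.asr y z ω = N.asr y p ω := by
      apply Filter.limsup_congr
      exact Eventually.of_forall fun n => by simp [nrm, (hω n).1 hmem]
    rw [heq, inf_eq_left.2 hmem]
  · have heq : N.asr y z ω = N.asr y q ω := by
      apply Filter.limsup_congr
      exact Eventually.of_forall fun n => by simp [nrm, (hω n).2 hmem]
    have hle : N.asr y q ω ≤ N.asr y p ω := le_of_not_ge hmem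
    rw [heq, inf_eq_right.2 hle]

end RNModule
namespace RNModule

variable {Ω E : Type*} [MeasurableSpace Ω] {μ : Measure Ω}
  [AddCommGroup E] [Module (Ω → ℝ) E]

lemma key_null (N : RNModule Ω μ E) {G : Set E} (hGconv : N.L0Convex G) (y : ℕ → E)
    {ρ : Ω → ℝ≥0∞} (hρmeas : Measurable ρ)
    (hρle : ∀ x ∈ G, ∀ᵐ ω ∂μ, ρ ω ≤ N.asr y x ω)
    {p q : E} (hp : p ∈ G) (hq : q ∈ G) {ε C γ c : ℝ}
    (hε : 0 < ε) (hC : 0 < C) (hγ0 : 0 ≤ γ) (hγ1 : γ ≤ 1) (hγc : γ ≤ c * ε / 8)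
    (hc0 : 0 < c) (hc2 : c ≤ 1/2)
    (huc : ∀ (a b : E) (R : Ω → ℝ), Measurable R → (∀ ω, ε/2 ≤ R ω) →
        (∀ ω, N.rnorm a ω ≤ R ω) → (∀ ω, N.rnorm b ω ≤ R ω) →
        ∀ D : Set Ω, MeasurableSet D →
        (∀ᵐ ω ∂μ, ω ∈ D → ε ≤ N.rnorm (a - b) ω ∧ R ω ≤ C + ε/2 + 2) →
        ∀ᵐ ω ∂μ, ω ∈ D → N.rnorm (a + b) ω ≤ 2 * (1 - c) * R ω) :
    μ {ω | ENNReal.ofReal ε ≤ N.nrm (p - q) ω ∧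
           N.asr y p ω ⊔ N.asr y q ω ≤ ρ ω + ENNReal.ofReal γ ∧
           ρ ω ≤ ENNReal.ofReal C} = 0 := by
  set γE := ENNReal.ofReal γ with hγE
  set Dbad : Set Ω := {ω | ENNReal.ofReal ε ≤ N.nrm (p - q) ω ∧
      N.asr y p ω ⊔ N.asr y q ω ≤ ρ ω + γE ∧ ρ ω ≤ ENNReal.ofReal C} with hDbad
  have hDbadm : MeasurableSet Dbad := by
    have hEq : Dbad = {ω | ENNReal.ofReal ε ≤ N.nrm (p - q) ω} ∩
        ({ω | N.asr y p ω ⊔ N.asr y q ω ≤ ρ ω + γE} ∩ {ω | ρ ω ≤ ENNReal.ofReal C}) := rfl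
    rw [hEq]
    exact (measurableSet_le measurable_const (N.measurable_nrm _)).inter
      ((measurableSet_le ((N.measurable_asr y p).max (N.measurable_asr y q))
        (hρmeas.add measurable_const)).inter (measurableSet_le hρmeas measurable_const))
  -- the midpoint of p and q
  set ξh : Ω → ℝ := fun _ => (1/2 : ℝ) with hξh
  set w : E := ξh • p + (1 - ξh) • q with hw
  have hwG : w ∈ G := hGconv p hp q hq ξh measurable_const
    (fun ω => by norm_num) (fun ω => by norm_num)
  have htwo : ∀ n : ℕ, (p - y n) + (q - y n) = ((fun _ => (2:ℝ)) : Ω → ℝ) • (w - y n) := by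
    intro n
    have h2w : ((fun _ => (2:ℝ)) : Ω → ℝ) • w = p + q := by
      rw [hw, smul_add, smul_smul, smul_smul]
      have e1 : ((fun _ => (2:ℝ)) : Ω → ℝ) * ξh = 1 := by
        funext ω; show (2:ℝ) * (1/2) = 1; norm_num
      have e2 : ((fun _ => (2:ℝ)) : Ω → ℝ) * (1 - ξh) = 1 := by
        funext ω; show (2:ℝ) * ((1:ℝ) - 1/2) = 1; norm_num
      rw [e1, e2, one_smul, one_smul]
    have h2y : ((fun _ => (2:ℝ)) : Ω → ℝ) • y n = y n + y n := by
      have he : ((fun _ => (2:ℝ)) : Ω → ℝ) = (1 : Ω → ℝ) + 1 := by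
        funext ω; show (2:ℝ) = 1 + 1; norm_num
      rw [he, add_smul, one_smul]
    rw [smul_sub, h2w, h2y]
    abel
  set Rn : ℕ → Ω → ℝ :=
    fun n ω => max (N.rnorm (p - y n) ω) (max (N.rnorm (q - y n) ω) (ε/2)) with hRn
  have hRnmeas : ∀ n, Measurable (Rn n) :=
    fun n => (N.measurable_rnorm _).max ((N.measurable_rnorm _).max measurable_const)
  have hRnfloor : ∀ n ω, ε/2 ≤ Rn n ω := fun n ω => le_max_of_le_right (le_max_right _ _)
  set Dn : ℕ → Set Ω := fun n => Dbad ∩ {ω | Rn n ω ≤ C + ε/2 + 2} with hDnd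
  have hDnm : ∀ n, MeasurableSet (Dn n) :=
    fun n => hDbadm.inter (measurableSet_le (hRnmeas n) measurable_const)
  have hDncond : ∀ n, ∀ᵐ ω ∂μ, ω ∈ Dn n →
      ε ≤ N.rnorm ((p - y n) - (q - y n)) ω ∧ Rn n ω ≤ C + ε/2 + 2 := by
    intro n
    filter_upwards [N.rnorm_nonneg (p - q)] with ω hnn
    rintro ⟨hω1, hω2⟩
    refine ⟨?_, hω2⟩
    have hpq : (p - y n) - (q - y n) = p - q := by abel
    rw [hpq]
    exact (ENNReal.ofReal_le_ofReal_iff hnn).1 hω1.1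
  have hconc : ∀ n, ∀ᵐ ω ∂μ, ω ∈ Dn n →
      N.rnorm ((p - y n) + (q - y n)) ω ≤ 2 * (1-c) * Rn n ω := fun n =>
    huc (p - y n) (q - y n) (Rn n) (hRnmeas n) (fun ω => hRnfloor n ω)
      (fun ω => le_max_left _ _) (fun ω => le_max_of_le_right (le_max_left _ _))
      (Dn n) (hDnm n) (hDncond n)
  have hhalf : ∀ n, ∀ᵐ ω ∂μ, ω ∈ Dn n →
      N.nrm (w - y n) ω ≤ ENNReal.ofReal (1-c) * ENNReal.ofReal (Rn n ω) := by
    intro n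
    have hsm := N.rnorm_smul ((fun _ => (2:ℝ)) : Ω → ℝ) measurable_const (w - y n)
    filter_upwards [hconc n, hsm] with ω h1 h2
    intro hω
    have h4 : N.rnorm ((p - y n) + (q - y n)) ω = 2 * N.rnorm (w - y n) ω := by
      rw [htwo n, h2]; norm_num
    have h5 : N.rnorm (w - y n) ω ≤ (1-c) * Rn n ω := by
      have h6 := h1 hω; rw [h4] at h6; linarith
    calc N.nrm (w - y n) ω ≤ ENNReal.ofReal ((1-c) * Rn n ω) := ENNReal.ofReal_le_ofReal h5
      _ = _ := ENNReal.ofReal_mul (by linarith)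
  have hofRn : ∀ n ω, ENNReal.ofReal (Rn n ω) =
      N.nrm (p - y n) ω ⊔ (N.nrm (q - y n) ω ⊔ ENNReal.ofReal (ε/2)) := by
    intro n ω
    have hmono : Monotone ENNReal.ofReal := fun _ _ h => ENNReal.ofReal_le_ofReal h
    show ENNReal.ofReal _ = _
    rw [hmono.map_max, hmono.map_max]
    rfl
  have htri : ∀ᵐ ω ∂μ, ∀ n, N.nrm (p - q) ω ≤ N.nrm (p - y n) ω + N.nrm (q - y n) ω := by
    refine ae_all_iff.2 fun n => ?_
    filter_upwards [N.nrm_triangle p (y n) q, N.nrm_sub_comm (y n) q] with ω h1 h2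
    rw [h2] at h1
    exact h1
  have hDnall : ∀ᵐ ω ∂μ, ∀ n, ω ∈ Dn n →
      N.nrm (w - y n) ω ≤ ENNReal.ofReal (1-c) * ENNReal.ofReal (Rn n ω) := ae_all_iff.2 hhalf
  have hnull : ∀ᵐ ω ∂μ, ω ∉ Dbad := by
    filter_upwards [htri, hDnall, hρle w hwG] with ω h1 h2 h3
    intro hmem
    obtain ⟨hd1, hd2, hd3⟩ := id hmem
    have hρfin : ρ ω ≠ ⊤ := (lt_of_le_of_lt hd3 ENNReal.ofReal_lt_top).ne
    set r : ℝ := (ρ ω).toReal with hrdef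
    have hρr : ρ ω = ENNReal.ofReal r := (ENNReal.ofReal_toReal hρfin).symm
    have hr0 : 0 ≤ r := ENNReal.toReal_nonneg
    have e4 : N.asr y p ω ≤ ρ ω + γE := le_trans le_sup_left hd2
    have e5 : N.asr y q ω ≤ ρ ω + γE := le_trans le_sup_right hd2
    -- step i
    have hi : ENNReal.ofReal ε ≤ (ρ ω + γE) + (ρ ω + γE) := by
      calc ENNReal.ofReal ε ≤ N.nrm (p - q) ω := hd1
        _ = limsup (fun _ : ℕ => N.nrm (p - q) ω) atTop := (limsup_const _).symm
        _ ≤ limsup (fun n => N.nrm (p - y n) ω + N.nrm (q - y n) ω) atTop :=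
            limsup_le_limsup (Eventually.of_forall h1)
        _ ≤ N.asr y p ω + N.asr y q ω := mylimsup_add_le _ _
        _ ≤ (ρ ω + γE) + (ρ ω + γE) := add_le_add e4 e5
    have hhalfε : ENNReal.ofReal (ε/2) ≤ ρ ω + γE := by
      have h2' : ENNReal.ofReal ε = 2 * ENNReal.ofReal (ε/2) := by
        rw [show ε = 2 * (ε/2) by ring, ENNReal.ofReal_mul (by norm_num : (0:ℝ) ≤ 2)]
        simp
      have h3' : (2:ℝ≥0∞) * ENNReal.ofReal (ε/2) ≤ 2 * (ρ ω + γE) := by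
        rw [← h2']
        calc ENNReal.ofReal ε ≤ (ρ ω + γE) + (ρ ω + γE) := hi
          _ = 2 * (ρ ω + γE) := (two_mul _).symm
      exact (ENNReal.mul_le_mul_iff_right (by norm_num) (by norm_num)).1 h3'
    -- step ii
    have hii : limsup (fun n => ENNReal.ofReal (Rn n ω)) atTop ≤ ρ ω + γE := by
      calc limsup (fun n => ENNReal.ofReal (Rn n ω)) atTop
          = limsup (fun n => N.nrm (p - y n) ω ⊔
              (N.nrm (q - y n) ω ⊔ ENNReal.ofReal (ε/2))) atTop :=
            limsup_congr (Eventually.of_forall fun n => hofRn n ω)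
        _ ≤ limsup (fun n => N.nrm (p - y n) ω) atTop ⊔
              limsup (fun n => N.nrm (q - y n) ω ⊔ ENNReal.ofReal (ε/2)) atTop :=
            mylimsup_sup_le _ _
        _ ≤ limsup (fun n => N.nrm (p - y n) ω) atTop ⊔
              (limsup (fun n => N.nrm (q - y n) ω) atTop ⊔
                limsup (fun _ : ℕ => ENNReal.ofReal (ε/2)) atTop) :=
            sup_le_sup_left (mylimsup_sup_le _ _) _
        _ = N.asr y p ω ⊔ (N.asr y q ω ⊔ ENNReal.ofReal (ε/2)) := by rw [limsup_const]; rfl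
        _ ≤ (ρ ω + γE) ⊔ ((ρ ω + γE) ⊔ (ρ ω + γE)) :=
            sup_le_sup e4 (sup_le_sup e5 hhalfε)
        _ = ρ ω + γE := by rw [sup_idem, sup_idem]
    -- step iii : eventually in Dn
    have hev : ∀ᶠ n in atTop, ω ∈ Dn n := by
      have hlt : limsup (fun n => ENNReal.ofReal (Rn n ω)) atTop <
          ENNReal.ofReal (C + ε/2 + 2) := by
        refine lt_of_le_of_lt hii ?_
        calc ρ ω + γE ≤ ENNReal.ofReal C + ENNReal.ofReal 1 :=
              add_le_add hd3 (ENNReal.ofReal_le_ofReal hγ1)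
          _ = ENNReal.ofReal (C + 1) := (ENNReal.ofReal_add hC.le (by norm_num)).symm
          _ < ENNReal.ofReal (C + ε/2 + 2) := by
              rw [ENNReal.ofReal_lt_ofReal_iff (by linarith)]
              linarith
      filter_upwards [eventually_lt_of_limsup_lt hlt] with n hn
      have h0 : 0 ≤ Rn n ω := le_trans (by linarith) (hRnfloor n ω)
      exact ⟨hmem, ((ENNReal.ofReal_lt_ofReal_iff_of_nonneg h0).1 hn).le⟩
    -- step iv
    have hiv : N.asr y w ω ≤ ENNReal.ofReal (1-c) * (ρ ω + γE) := by
      have e1 : ∀ᶠ n in atTop, N.nrm (w - y n) ω ≤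
          ENNReal.ofReal (1-c) * ENNReal.ofReal (Rn n ω) := hev.mono fun n hn => h2 n hn
      calc N.asr y w ω
          ≤ limsup (fun n => ENNReal.ofReal (1-c) * ENNReal.ofReal (Rn n ω)) atTop :=
            limsup_le_limsup e1
        _ = ENNReal.ofReal (1-c) * limsup (fun n => ENNReal.ofReal (Rn n ω)) atTop :=
            mylimsup_const_mul ENNReal.ofReal_ne_top _
        _ ≤ _ := mul_le_mul_right hii _
    have hv : ρ ω ≤ ENNReal.ofReal (1-c) * (ρ ω + γE) := le_trans h3 hiv
    -- translate to real numbers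
    have hrr : ρ ω + γE = ENNReal.ofReal (r + γ) := by
      rw [hρr, hγE, ← ENNReal.ofReal_add hr0 hγ0]
    have hv' : r ≤ (1-c) * (r + γ) := by
      have hv2 : ENNReal.ofReal r ≤ ENNReal.ofReal ((1-c) * (r + γ)) := by
        calc ENNReal.ofReal r = ρ ω := hρr.symm
          _ ≤ ENNReal.ofReal (1-c) * (ρ ω + γE) := hv
          _ = ENNReal.ofReal (1-c) * ENNReal.ofReal (r + γ) := by rw [hrr]
          _ = ENNReal.ofReal ((1-c) * (r + γ)) := (ENNReal.ofReal_mul (by linarith)).symm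
      exact (ENNReal.ofReal_le_ofReal_iff (by nlinarith)).1 hv2
    have hεr : ε ≤ 2 * (r + γ) := by
      have h5 : ENNReal.ofReal ε ≤ ENNReal.ofReal (2 * (r+γ)) := by
        calc ENNReal.ofReal ε ≤ (ρ ω + γE) + (ρ ω + γE) := hi
          _ = ENNReal.ofReal (r+γ) + ENNReal.ofReal (r+γ) := by rw [hrr]
          _ = ENNReal.ofReal (2 * (r+γ)) := by
              rw [← ENNReal.ofReal_add (by linarith) (by linarith)]
              ring_nf
      exact (ENNReal.ofReal_le_ofReal_iff (by nlinarith)).1 h5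
    have hcr : c * (r + γ) ≤ γ := by nlinarith
    have h6 : c * ε ≤ c * (2 * (r + γ)) := mul_le_mul_of_nonneg_left hεr hc0.le
    have h7 : c * (2 * (r + γ)) = 2 * (c * (r + γ)) := by ring
    nlinarith [mul_pos hε hc0]
  exact measure_eq_zero_iff_ae_notMem.2 hnull

end RNModule
namespace RNModule

variable {Ω E : Type*} [MeasurableSpace Ω] {μ : Measure Ω}
  [AddCommGroup E] [Module (Ω → ℝ) E]

lemma main_fixed (N : RNModule Ω μ E) [IsProbabilityMeasure μ] (hcomp : N.Complete)
    (hruc : N.RandomUniformlyConvex) {G : Set E} (hGne : G.Nonempty) (hGc : N.IsClosedSet G)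
    (hGconv : N.L0Convex G) {T : E → E} (hTG : ∀ x ∈ G, T x ∈ G)
    (hTne : ∀ x ∈ G, ∀ x' ∈ G, ∀ᵐ ω ∂μ, N.rnorm (T x - T x') ω ≤ N.rnorm (x - x') ω)
    (hbnd : N.AeBounded (T '' G)) : ∃ x ∈ G, T x = x := by
  obtain ⟨η, hηmeas, hη⟩ := hbnd
  have hηT : ∀ x ∈ G, ∀ᵐ ω ∂μ, N.rnorm (T x) ω ≤ η ω := fun x hx => hη _ ⟨x, hx, rfl⟩
  obtain ⟨x₀, hx₀⟩ := hGne
  have hη0 : ∀ᵐ ω ∂μ, 0 ≤ η ω := by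
    filter_upwards [hηT x₀ hx₀, N.rnorm_nonneg (T x₀)] with ω h1 h2
    linarith
  -- Step A: approximate fixed point sequence via random Banach contractions
  have hafp : ∀ n : ℕ, ∃ z ∈ G, ∀ᵐ ω ∂μ,
      N.rnorm (z - T z) ω ≤ (1/((n:ℝ)+2)) * (N.rnorm x₀ ω + η ω) := by
    intro n
    have hn2 : (0:ℝ) < (n:ℝ) + 2 := by positivity
    have hfrac0 : 0 < 1/((n:ℝ)+2) := by positivity
    have hfrac1 : 1/((n:ℝ)+2) ≤ 1/2 := by
      rw [div_le_div_iff₀ hn2 (by norm_num)]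
      have : (0:ℝ) ≤ (n:ℝ) := Nat.cast_nonneg n
      linarith
    set t : ℝ := 1 - 1/((n:ℝ)+2) with htdef
    have ht0 : 0 < t := by rw [htdef]; linarith
    have ht1 : t < 1 := by rw [htdef]; linarith
    set tb : Ω → ℝ := fun _ => t with htb
    set S : E → E := fun x => tb • T x + (1 - tb) • x₀ with hS
    have hSG : ∀ x ∈ G, S x ∈ G := fun x hx =>
      hGconv (T x) (hTG x hx) x₀ hx₀ tb measurable_const (fun ω => ht0.le)
        (fun ω => by show t ≤ 1; linarith)
    have hScontr : ∀ x ∈ G, ∀ x' ∈ G, ∀ᵐ ω ∂μ,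
        N.rnorm (S x - S x') ω ≤ t * N.rnorm (x - x') ω := by
      intro x hx x' hx'
      have hdiff : S x - S x' = tb • (T x - T x') := by
        show tb • T x + (1 - tb) • x₀ - (tb • T x' + (1 - tb) • x₀) = tb • (T x - T x')
        rw [smul_sub]
        abel
      filter_upwards [N.rnorm_smul tb measurable_const (T x - T x'), hTne x hx x' hx']
        with ω h1 h2
      rw [hdiff, h1]
      have habs : |tb ω| = t := abs_of_pos ht0
      rw [habs]
      exact mul_le_mul_of_nonneg_left h2 ht0.le
    obtain ⟨z, hzG, hzfix⟩ := N.exists_fixedPoint_of_contraction hcomp hGc hSG hx₀ ht0 ht1 hScontr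
    refine ⟨z, hzG, ?_⟩
    have h1 : tb • T z + (1 - tb) • T z = T z := by
      rw [← add_smul, show tb + (1 - tb) = (1:Ω→ℝ) by ring, one_smul]
    have hzeq : z - T z = ((1:Ω → ℝ) - tb) • (x₀ - T z) := by
      calc z - T z = S z - T z := by rw [hzfix]
        _ = tb • T z + (1 - tb) • x₀ - (tb • T z + (1 - tb) • T z) := by
            rw [h1]
        _ = (1 - tb) • x₀ - (1 - tb) • T z := by abel
        _ = ((1:Ω→ℝ) - tb) • (x₀ - T z) := (smul_sub _ _ _).symm
    filter_upwards [N.rnorm_smul ((1:Ω→ℝ) - tb) (measurable_const.sub measurable_const)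
      (x₀ - T z), N.rnorm_add x₀ (- T z), N.rnorm_neg (T z), hηT z hzG,
      N.rnorm_nonneg (x₀ - T z)] with ω h2 h3 h4 h5 h6
    rw [hzeq, h2]
    have habs : |((1:Ω→ℝ) - tb) ω| = 1/((n:ℝ)+2) := by
      show |1 - t| = _
      rw [abs_of_nonneg (by rw [htdef]; linarith)]
      rw [htdef]; ring
    rw [habs]
    have h7 : N.rnorm (x₀ - T z) ω ≤ N.rnorm x₀ ω + η ω := by
      rw [← sub_eq_add_neg] at h3
      rw [h4] at h3
      linarith
    exact mul_le_mul_of_nonneg_left h7 hfrac0.le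
  choose y hyG hyfp using hafp
  -- uniform bound for the asymptotic radius
  have hub : ∀ x : E, ∀ᵐ ω ∂μ, ∀ n : ℕ,
      N.nrm (x - y n) ω ≤ ENNReal.ofReal (N.rnorm x ω + η ω + (N.rnorm x₀ ω + η ω)) := by
    intro x
    refine ae_all_iff.2 fun n => ?_
    have hn2 : (0:ℝ) < (n:ℝ) + 2 := by positivity
    filter_upwards [N.rnorm_triangle x (T (y n)) (y n), N.rnorm_add x (-(T (y n))),
      N.rnorm_neg (T (y n)), hηT (y n) (hyG n), N.rnorm_sub_comm (T (y n)) (y n),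
      hyfp n, hη0, N.rnorm_nonneg x₀] with ω h1 h2 h3 h4 h5 h6 h7 h8
    rw [← sub_eq_add_neg] at h2
    rw [h3] at h2
    rw [h5] at h1
    have hq : (1/((n:ℝ)+2)) * (N.rnorm x₀ ω + η ω) ≤ N.rnorm x₀ ω + η ω := by
      have hβ0 : 0 ≤ N.rnorm x₀ ω + η ω := by linarith
      have : 1/((n:ℝ)+2) ≤ 1 := by
        rw [div_le_one hn2]; linarith
      nlinarith
    have : N.rnorm (x - y n) ω ≤ N.rnorm x ω + η ω + (N.rnorm x₀ ω + η ω) := by linarith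
    exact ENNReal.ofReal_le_ofReal this
  have hfin : ∀ x : E, ∀ᵐ ω ∂μ, N.asr y x ω < ⊤ := by
    intro x
    filter_upwards [hub x] with ω h
    exact lt_of_le_of_lt (limsup_le_of_le (by isBoundedDefault)
      (Eventually.of_forall h)) ENNReal.ofReal_lt_top
  -- the compressed functional and its infimum over G
  set φ : ℝ≥0∞ → ℝ≥0∞ := fun s => 1 - (1 + s)⁻¹ with hφ
  have hφmono : Monotone φ := fun s t h =>
    tsub_le_tsub_left (ENNReal.inv_le_inv.2 (add_le_add_right h 1)) 1
  have hφle1 : ∀ s, φ s ≤ 1 := fun s => tsub_le_self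
  have hφne : ∀ s, φ s ≠ ⊤ := fun s => ne_top_of_le_ne_top ENNReal.one_ne_top (hφle1 s)
  have hφrefl : ∀ s t : ℝ≥0∞, φ s ≤ φ t → s ≤ t := by
    intro s t h
    have h3 : (1+t)⁻¹ ≤ 1 := ENNReal.inv_le_one.2 le_self_add
    have h1 : (1+t)⁻¹ ≤ (1+s)⁻¹ :=
      (ENNReal.sub_le_sub_iff_left h3 ENNReal.one_ne_top).1 h
    have h4 : (1:ℝ≥0∞) + s ≤ 1 + t := ENNReal.inv_le_inv.1 h1
    exact (ENNReal.add_le_add_iff_left ENNReal.one_ne_top).1 h4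
  have hφcont : Continuous φ :=
    (ENNReal.continuous_sub_left ENNReal.one_ne_top).comp
      (continuous_inv.comp (continuous_add_left 1))
  have hφmeas : Measurable φ := hφcont.measurable
  set Jf : E → ℝ≥0∞ := fun x => ∫⁻ ω, φ (N.asr y x ω) ∂μ with hJf
  have hJle1 : ∀ x, Jf x ≤ 1 := by
    intro x
    calc Jf x ≤ ∫⁻ _, 1 ∂μ := lintegral_mono fun ω => hφle1 _
      _ = 1 := by simp
  set I : ℝ≥0∞ := ⨅ (x : E) (_ : x ∈ G), Jf x with hI
  have hIle : ∀ x ∈ G, I ≤ Jf x := fun x hx => iInf_le_of_le x (iInf_le _ hx)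
  have hIne : I ≠ ⊤ :=
    ne_top_of_le_ne_top ENNReal.one_ne_top (le_trans (hIle x₀ hx₀) (hJle1 x₀))
  have hmin : ∀ k : ℕ, ∃ x, x ∈ G ∧ Jf x < I + ((k:ℝ≥0∞)+1)⁻¹ := by
    intro k
    by_contra hcon
    push_neg at hcon
    have hle : I + ((k:ℝ≥0∞)+1)⁻¹ ≤ I := le_iInf₂ fun x hx => hcon x hx
    have hlt : I < I + ((k:ℝ≥0∞)+1)⁻¹ := ENNReal.lt_add_right hIne
      (ENNReal.inv_ne_zero.2 (by simp))
    exact absurd hle (not_le.2 hlt)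
  choose xk hxkG hxkJ using hmin
  -- pasting recursion
  have hpaste := fun (p : E) (hp : p ∈ G) (q : E) (hq : q ∈ G) => N.paste hGconv y hp hq
  choose pz hpzG hpzae using hpaste
  let urec : ℕ → {v : E // v ∈ G} := fun k =>
    Nat.rec (motive := fun _ => {v : E // v ∈ G}) ⟨xk 0, hxkG 0⟩
      (fun k prev => ⟨pz prev.1 prev.2 (xk (k+1)) (hxkG (k+1)),
        hpzG prev.1 prev.2 (xk (k+1)) (hxkG (k+1))⟩) k
  set U : ℕ → E := fun k => (urec k).1 with hU
  have hUG : ∀ k, U k ∈ G := fun k => (urec k).2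
  have hUrec : ∀ k, ∀ᵐ ω ∂μ,
      N.asr y (U (k+1)) ω = N.asr y (U k) ω ⊓ N.asr y (xk (k+1)) ω := fun k =>
    hpzae (U k) (hUG k) (xk (k+1)) (hxkG (k+1))
  set ρ : Ω → ℝ≥0∞ := fun ω => ⨅ k, N.asr y (U k) ω with hρ
  have hρmeas : Measurable ρ := Measurable.iInf fun k => N.measurable_asr y (U k)
  have hρleU : ∀ k ω, ρ ω ≤ N.asr y (U k) ω := fun k ω => iInf_le _ k
  have hanti : ∀ᵐ ω ∂μ, ∀ k, N.asr y (U (k+1)) ω ≤ N.asr y (U k) ω :=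
    ae_all_iff.2 fun k => (hUrec k).mono fun ω h => le_of_eq_of_le h inf_le_left
  have hUle : ∀ k, ∀ᵐ ω ∂μ, N.asr y (U k) ω ≤ N.asr y (xk k) ω := by
    intro k
    cases k with
    | zero => exact Eventually.of_forall fun ω => le_of_eq rfl
    | succ k => exact (hUrec k).mono fun ω h => le_of_eq_of_le h inf_le_right
  have hJmono : ∀ {a b : E}, (∀ᵐ ω ∂μ, N.asr y a ω ≤ N.asr y b ω) → Jf a ≤ Jf b := fun h =>
    lintegral_mono_ae (h.mono fun ω h' => hφmono h')
  have hJU : ∀ k, Jf (U k) < I + ((k:ℝ≥0∞)+1)⁻¹ := fun k =>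
    lt_of_le_of_lt (hJmono (hUle k)) (hxkJ k)
  -- Claim 1 : ρ is an a.e. lower bound for asr on G
  have hρle : ∀ x ∈ G, ∀ᵐ ω ∂μ, ρ ω ≤ N.asr y x ω := by
    intro x hx
    have hzkae : ∀ k, ∀ᵐ ω ∂μ,
        N.asr y (pz (U k) (hUG k) x hx) ω = N.asr y (U k) ω ⊓ N.asr y x ω := fun k =>
      hpzae (U k) (hUG k) x hx
    have hmU : ∀ k : ℕ, Measurable fun ω => φ (N.asr y (U k) ω) := fun k =>
      hφmeas.comp (N.measurable_asr y (U k))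
    have hmmin : ∀ k : ℕ, Measurable fun ω => φ (N.asr y (U k) ω ⊓ N.asr y x ω) := fun k =>
      hφmeas.comp ((N.measurable_asr y (U k)).min (N.measurable_asr y x))
    set gk : ℕ → Ω → ℝ≥0∞ :=
      fun k ω => φ (N.asr y (U k) ω) - φ (N.asr y (U k) ω ⊓ N.asr y x ω) with hgk
    have hgkmeas : ∀ k, Measurable (gk k) := fun k => (hmU k).sub (hmmin k)
    have hIk : ∀ k, I ≤ ∫⁻ ω, φ (N.asr y (U k) ω ⊓ N.asr y x ω) ∂μ := by
      intro k
      have heq : ∫⁻ ω, φ (N.asr y (U k) ω ⊓ N.asr y x ω) ∂μ = Jf (pz (U k) (hUG k) x hx) :=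
        lintegral_congr_ae ((hzkae k).mono fun ω h => by simp only [h])
      rw [heq]
      exact hIle _ (hpzG (U k) (hUG k) x hx)
    have hintk : ∀ k, ∫⁻ ω, gk k ω ∂μ ≤ ((k:ℝ≥0∞)+1)⁻¹ := by
      intro k
      have hfinint : ∫⁻ ω, φ (N.asr y (U k) ω ⊓ N.asr y x ω) ∂μ ≠ ⊤ :=
        ne_top_of_le_ne_top ENNReal.one_ne_top
          (le_trans (lintegral_mono fun ω => hφle1 _) (by simp))
      have hsub : ∫⁻ ω, gk k ω ∂μ =
          Jf (U k) - ∫⁻ ω, φ (N.asr y (U k) ω ⊓ N.asr y x ω) ∂μ :=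
        lintegral_sub (hmmin k) hfinint (Eventually.of_forall fun ω => hφmono inf_le_left)
      rw [hsub]
      calc Jf (U k) - ∫⁻ ω, φ (N.asr y (U k) ω ⊓ N.asr y x ω) ∂μ
          ≤ (I + ((k:ℝ≥0∞)+1)⁻¹) - I := tsub_le_tsub (hJU k).le (hIk k)
        _ = ((k:ℝ≥0∞)+1)⁻¹ := by rw [ENNReal.add_sub_cancel_left hIne]
    set ginf : Ω → ℝ≥0∞ := fun ω => φ (ρ ω) - φ (ρ ω ⊓ N.asr y x ω) with hginfd
    have hglim : ∀ᵐ ω ∂μ, Tendsto (fun k => gk k ω) atTop (nhds (ginf ω)) := by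
      filter_upwards [hanti] with ω hω
      have hmono' : Antitone fun k => N.asr y (U k) ω := antitone_nat_of_succ_le hω
      have ht1 : Tendsto (fun k => N.asr y (U k) ω) atTop (nhds (ρ ω)) :=
        tendsto_atTop_iInf hmono'
      have ht2 : Tendsto (fun k => N.asr y (U k) ω ⊓ N.asr y x ω) atTop
          (nhds (ρ ω ⊓ N.asr y x ω)) := ht1.min tendsto_const_nhds
      have ht3 := (hφcont.tendsto _).comp ht1
      have ht4 := (hφcont.tendsto _).comp ht2
      exact ENNReal.Tendsto.sub ht3 ht4 (Or.inl (hφne _))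
    have hseq : Tendsto (fun k : ℕ => ((k:ℝ≥0∞)+1)⁻¹) atTop (nhds 0) := by
      have h1 := ENNReal.tendsto_inv_nat_nhds_zero.comp (tendsto_add_atTop_nat 1)
      have h2 : ((fun n : ℕ => (n:ℝ≥0∞)⁻¹) ∘ (fun n => n + 1)) =
          fun k : ℕ => ((k:ℝ≥0∞)+1)⁻¹ := by
        funext k
        simp [Function.comp]
      rwa [h2] at h1
    have hint0 : ∫⁻ ω, ginf ω ∂μ = 0 := by
      have hcongr : ∫⁻ ω, ginf ω ∂μ = ∫⁻ ω, liminf (fun k => gk k ω) atTop ∂μ :=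
        lintegral_congr_ae (hglim.mono fun ω h => h.liminf_eq.symm)
      have hliminf0 : liminf (fun k => ∫⁻ ω, gk k ω ∂μ) atTop = 0 := by
        have hle : liminf (fun k => ∫⁻ ω, gk k ω ∂μ) atTop ≤
            liminf (fun k : ℕ => ((k:ℝ≥0∞)+1)⁻¹) atTop :=
          liminf_le_liminf (Eventually.of_forall hintk)
        rw [hseq.liminf_eq] at hle
        exact le_antisymm hle (zero_le)
      rw [hcongr]
      exact le_antisymm (le_trans (lintegral_liminf_le hgkmeas) (le_of_eq hliminf0))
        (zero_le)
    have hginfmeas : Measurable ginf :=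
      (hφmeas.comp hρmeas).sub (hφmeas.comp (hρmeas.min (N.measurable_asr y x)))
    have hg0 : ∀ᵐ ω ∂μ, ginf ω = 0 := (lintegral_eq_zero_iff hginfmeas).1 hint0
    filter_upwards [hg0] with ω h
    have h1 : φ (ρ ω) ≤ φ (ρ ω ⊓ N.asr y x ω) := by
      have h2 : φ (ρ ω ⊓ N.asr y x ω) ≤ φ (ρ ω) := hφmono inf_le_left
      exact tsub_eq_zero_iff_le.1 h
    exact le_trans (hφrefl _ _ h1) inf_le_right
  -- Step C : the minimizing sequence is Cauchy in probability
  have hCauchy : N.CauchyInProb U := by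
    intro ε hε δ hδ
    have hδE0 : ENNReal.ofReal δ ≠ 0 := (ENNReal.ofReal_pos.2 hδ).ne'
    -- choice of the truncation level C
    set A : ℕ → Set Ω := fun m => {ω | (m:ℝ≥0∞) ≤ N.asr y (U 0) ω} with hA
    have hAm : ∀ m, MeasurableSet (A m) := fun m =>
      measurableSet_le measurable_const (N.measurable_asr y (U 0))
    have hAanti : Antitone A := by
      intro m m' hmm' ω hω
      exact le_trans (show ((m:ℝ≥0∞)) ≤ (m':ℝ≥0∞) from Nat.cast_le.2 hmm') hω
    have hAtend : Tendsto (fun m => μ (A m)) atTop (nhds 0) := by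
      have h1 := tendsto_measure_iInter_atTop (fun m => (hAm m).nullMeasurableSet) hAanti
        ⟨0, measure_ne_top μ _⟩
      have h2 : μ (⋂ m, A m) = 0 := by
        have hsub : (⋂ m, A m) ⊆ {ω | N.asr y (U 0) ω = ⊤} := by
          intro ω hω
          simp only [Set.mem_iInter] at hω
          show N.asr y (U 0) ω = ⊤
          by_contra hne
          obtain ⟨m, hmlt⟩ := ENNReal.exists_nat_gt hne
          exact absurd (hω m) (not_le.2 hmlt)
        refine measure_mono_null hsub ?_
        have h3 : ∀ᵐ ω ∂μ, ¬ (N.asr y (U 0) ω = ⊤) := (hfin (U 0)).mono fun ω h => h.ne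
        simpa using ae_iff.1 h3
      rwa [h2] at h1
    obtain ⟨m₀, hm₀⟩ := (hAtend.eventually_lt_const (ENNReal.half_pos hδE0)).exists
    set C : ℝ := (m₀ : ℝ) + 1 with hCdef
    have hCpos : 0 < C := by positivity
    obtain ⟨c, hc0, hc2, huc⟩ := N.uc_pair hruc hε (show (0:ℝ) < C + ε/2 + 2 by positivity)
    set γ : ℝ := min (c*ε/8) 1 with hγdef
    have hγpos : 0 < γ := lt_min (by positivity) one_pos
    have hγ1 : γ ≤ 1 := min_le_right _ _
    have hγc : γ ≤ c*ε/8 := min_le_left _ _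
    have hγE0 : ENNReal.ofReal γ ≠ 0 := (ENNReal.ofReal_pos.2 hγpos).ne'
    -- choice of the index K₀
    set F : ℕ → Ω → ℝ≥0∞ := fun K ω => ⨅ j : Fin (K+1), N.asr y (U j) ω with hF
    have hFmeas : ∀ K, Measurable (F K) := fun K =>
      Measurable.iInf fun j => N.measurable_asr y (U j)
    have hFanti : ∀ K K', K ≤ K' → ∀ ω, F K' ω ≤ F K ω := by
      intro K K' hKK' ω
      refine le_iInf fun j => ?_
      exact iInf_le_of_le ⟨j.1, lt_of_lt_of_le j.2 (Nat.succ_le_succ hKK')⟩ le_rfl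
    have hFρ : ∀ K ω, ρ ω ≤ F K ω := fun K ω => le_iInf fun j => iInf_le _ _
    have hFU : ∀ K ω, F K ω ≤ N.asr y (U K) ω := fun K ω =>
      iInf_le_of_le ⟨K, Nat.lt_succ_self K⟩ le_rfl
    set B : ℕ → Set Ω := fun K => {ω | ρ ω + ENNReal.ofReal γ < F K ω} with hB
    have hBm : ∀ K, MeasurableSet (B K) := fun K =>
      measurableSet_lt (hρmeas.add measurable_const) (hFmeas K)
    have hBanti : Antitone B := fun K K' hKK' ω hω => lt_of_lt_of_le hω (hFanti K K' hKK' ω)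
    have hBtend : Tendsto (fun K => μ (B K)) atTop (nhds 0) := by
      have h1 := tendsto_measure_iInter_atTop (fun K => (hBm K).nullMeasurableSet) hBanti
        ⟨0, measure_ne_top μ _⟩
      have h2 : μ (⋂ K, B K) = 0 := by
        have hsub : (⋂ K, B K) ⊆ {ω | ρ ω = ⊤} := by
          intro ω hω
          simp only [Set.mem_iInter] at hω
          show ρ ω = ⊤
          by_contra hne
          have hle : ρ ω + ENNReal.ofReal γ ≤ ρ ω := by
            have h4 : ρ ω + ENNReal.ofReal γ ≤ ⨅ K, N.asr y (U K) ω :=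
              le_iInf fun K => le_trans (hω K).le (hFU K ω)
            exact h4
          exact absurd hle (not_le.2 (ENNReal.lt_add_right hne hγE0))
        refine measure_mono_null hsub ?_
        have h3 : ∀ᵐ ω ∂μ, ¬ (ρ ω = ⊤) :=
          (hfin (U 0)).mono fun ω h => (lt_of_le_of_lt (hρleU 0 ω) h).ne
        simpa using ae_iff.1 h3
      rwa [h2] at h1
    obtain ⟨K₀, hK₀⟩ := (hBtend.eventually_lt_const (ENNReal.half_pos hδE0)).exists
    refine ⟨K₀, fun m hm k hk => ?_⟩
    have hDbad0 := N.key_null hGconv y hρmeas hρle (hUG m) (hUG k) hε hCpos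
      hγpos.le hγ1 hγc hc0 hc2 huc
    have hcover : ∀ᵐ ω ∂μ, ω ∈ {ω | ε ≤ N.rnorm (U m - U k) ω} →
        ω ∈ ({ω | ENNReal.ofReal ε ≤ N.nrm (U m - U k) ω ∧
             N.asr y (U m) ω ⊔ N.asr y (U k) ω ≤ ρ ω + ENNReal.ofReal γ ∧
             ρ ω ≤ ENNReal.ofReal C} ∪ (A m₀ ∪ B K₀)) := by
      filter_upwards [hanti] with ω hωanti
      intro hωmem
      have hmono' : Antitone fun j => N.asr y (U j) ω := antitone_nat_of_succ_le hωanti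
      have h1 : ENNReal.ofReal ε ≤ N.nrm (U m - U k) ω := ENNReal.ofReal_le_ofReal hωmem
      by_cases hρC : ρ ω ≤ ENNReal.ofReal C
      · by_cases hnear : N.asr y (U m) ω ⊔ N.asr y (U k) ω ≤ ρ ω + ENNReal.ofReal γ
        · exact Or.inl ⟨h1, hnear, hρC⟩
        · right; right
          show ρ ω + ENNReal.ofReal γ < F K₀ ω
          have h2 : ρ ω + ENNReal.ofReal γ < N.asr y (U m) ω ∨
              ρ ω + ENNReal.ofReal γ < N.asr y (U k) ω := by
            by_contra hcon
            push_neg at hcon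
            exact hnear (sup_le hcon.1 hcon.2)
          have h3 : ∀ i, K₀ ≤ i → N.asr y (U i) ω ≤ F K₀ ω := by
            intro i hi
            refine le_iInf fun j => ?_
            exact hmono' (le_trans (Nat.le_of_lt_succ j.2) hi)
          rcases h2 with h2 | h2
          · exact lt_of_lt_of_le h2 (h3 m hm)
          · exact lt_of_lt_of_le h2 (h3 k hk)
      · right; left
        show (m₀:ℝ≥0∞) ≤ N.asr y (U 0) ω
        have h2 : ENNReal.ofReal C < ρ ω := not_le.1 hρC
        have h3 : (m₀:ℝ≥0∞) ≤ ENNReal.ofReal C := by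
          rw [← ENNReal.ofReal_natCast m₀]
          exact ENNReal.ofReal_le_ofReal (by rw [hCdef]; linarith)
        exact le_trans h3 (le_trans h2.le (hρleU 0 ω))
    calc μ {ω | ε ≤ N.rnorm (U m - U k) ω}
        ≤ μ ({ω | ENNReal.ofReal ε ≤ N.nrm (U m - U k) ω ∧
             N.asr y (U m) ω ⊔ N.asr y (U k) ω ≤ ρ ω + ENNReal.ofReal γ ∧
             ρ ω ≤ ENNReal.ofReal C} ∪ (A m₀ ∪ B K₀)) := measure_mono_ae hcover
      _ ≤ μ {ω | ENNReal.ofReal ε ≤ N.nrm (U m - U k) ω ∧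
             N.asr y (U m) ω ⊔ N.asr y (U k) ω ≤ ρ ω + ENNReal.ofReal γ ∧
             ρ ω ≤ ENNReal.ofReal C} + μ (A m₀ ∪ B K₀) := measure_union_le _ _
      _ ≤ 0 + (μ (A m₀) + μ (B K₀)) := add_le_add (le_of_eq hDbad0) (measure_union_le _ _)
      _ ≤ 0 + (ENNReal.ofReal δ / 2 + ENNReal.ofReal δ / 2) :=
          add_le_add le_rfl (add_le_add hm₀.le hK₀.le)
      _ = ENNReal.ofReal δ := by rw [zero_add, ENNReal.add_halves]
  -- Step D : pass to the limit
  obtain ⟨v, hvlim⟩ := hcomp U hCauchy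
  have hvG : v ∈ G := hGc U v hUG hvlim
  have hks : ∀ j : ℕ, ∃ kj, j ≤ kj ∧
      μ {ω | 1/((j:ℝ)+1) ≤ N.rnorm (U kj - v) ω} ≤ (2:ℝ≥0∞)⁻¹ ^ j := by
    intro j
    have hpos : (0:ℝ) < 1/((j:ℝ)+1) := by positivity
    have htend := hvlim (1/((j:ℝ)+1)) hpos
    have hb : (0:ℝ≥0∞) < (2:ℝ≥0∞)⁻¹ ^ j := by
      refine pos_iff_ne_zero.2 (pow_ne_zero _ ?_)
      exact ENNReal.inv_ne_zero.2 (by norm_num)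
    have hev : ∀ᶠ n in atTop,
        μ {ω | 1/((j:ℝ)+1) ≤ N.rnorm (U n - v) ω} ≤ (2:ℝ≥0∞)⁻¹ ^ j := by
      filter_upwards [htend.eventually_lt_const hb] with n hn using hn.le
    obtain ⟨kj, hkj1, hkj2⟩ := (hev.and (eventually_ge_atTop j)).exists
    exact ⟨kj, hkj2, hkj1⟩
  choose ks hksge hksμ using hks
  have hBC : ∀ᵐ ω ∂μ, ∀ᶠ (j : ℕ) in atTop,
      ω ∉ {ω | 1/((j:ℝ)+1) ≤ N.rnorm (U (ks j) - v) ω} := by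
    apply ae_eventually_notMem
    refine ne_top_of_le_ne_top ?_ (ENNReal.tsum_le_tsum hksμ)
    rw [ENNReal.tsum_geometric, ENNReal.one_sub_inv_two, inv_inv]
    exact ENNReal.ofNat_ne_top
  have hUksasr : ∀ᵐ ω ∂μ, ∀ j,
      N.asr y v ω ≤ N.nrm (v - U (ks j)) ω + N.asr y (U (ks j)) ω := by
    refine ae_all_iff.2 fun j => ?_
    filter_upwards [ae_all_iff.2 fun n => N.nrm_triangle v (U (ks j)) (y n)] with ω h
    exact mylimsup_le_add (Eventually.of_forall h)
  have hasrv : ∀ᵐ ω ∂μ, N.asr y v ω ≤ ρ ω := by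
    filter_upwards [hBC, hUksasr, hanti,
      ae_all_iff.2 fun j : ℕ => N.nrm_sub_comm v (U (ks j))] with ω h1 h2 h3 h4
    have hmono' : Antitone fun k => N.asr y (U k) ω := antitone_nat_of_succ_le h3
    have ht1 : Tendsto (fun j => N.nrm (v - U (ks j)) ω) atTop (nhds 0) := by
      have hev : ∀ᶠ j in atTop, N.nrm (v - U (ks j)) ω ≤ ENNReal.ofReal (1/((j:ℝ)+1)) := by
        filter_upwards [h1] with j hj
        rw [h4 j]
        exact ENNReal.ofReal_le_ofReal (le_of_not_ge hj)
      have hbase : Tendsto (fun j : ℕ => ENNReal.ofReal (1/((j:ℝ)+1))) atTop (nhds 0) := by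
        have h5 := ENNReal.tendsto_ofReal tendsto_one_div_add_atTop_nhds_zero_nat
        simpa using h5
      exact tendsto_of_tendsto_of_tendsto_of_le_of_le' tendsto_const_nhds hbase
        (Eventually.of_forall fun j => zero_le) hev
    have ht2 : Tendsto (fun j => N.asr y (U (ks j)) ω) atTop (nhds (ρ ω)) :=
      (tendsto_atTop_iInf hmono').comp (tendsto_atTop_mono hksge tendsto_id)
    have hsum := ht1.add ht2
    rw [zero_add] at hsum
    exact ge_of_tendsto hsum (Eventually.of_forall fun j => h2 j)
  have hTvle : ∀ᵐ ω ∂μ, N.asr y (T v) ω ≤ N.asr y v ω := by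
    have htr : ∀ n : ℕ, ∀ᵐ ω ∂μ, N.nrm (T v - y n) ω ≤
        N.nrm (v - y n) ω + ENNReal.ofReal ((1/((n:ℝ)+2)) * (N.rnorm x₀ ω + η ω)) := by
      intro n
      filter_upwards [N.nrm_triangle (T v) (T (y n)) (y n), hTne v hvG (y n) (hyG n),
        hyfp n, N.rnorm_sub_comm (T (y n)) (y n)] with ω h1 h2 h3 h4
      refine le_trans h1 (add_le_add (ENNReal.ofReal_le_ofReal h2) ?_)
      show N.nrm (T (y n) - y n) ω ≤ _
      have h5 : N.rnorm (T (y n) - y n) ω ≤ (1/((n:ℝ)+2)) * (N.rnorm x₀ ω + η ω) := by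
        rw [h4]; exact h3
      exact ENNReal.ofReal_le_ofReal h5
    filter_upwards [ae_all_iff.2 htr] with ω h
    have h6 : Tendsto (fun n : ℕ =>
        ENNReal.ofReal ((1/((n:ℝ)+2)) * (N.rnorm x₀ ω + η ω))) atTop (nhds 0) := by
      have h8 : Tendsto (fun n : ℕ => 1/((n:ℝ)+2)) atTop (nhds 0) := by
        have h9 := (tendsto_one_div_add_atTop_nhds_zero_nat (𝕜 := ℝ)).comp (tendsto_add_atTop_nat 1)
        have h10 : ((fun n : ℕ => 1/((n:ℝ)+1)) ∘ (fun n : ℕ => n + 1)) =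
            fun n : ℕ => 1/((n:ℝ)+2) := by
          funext n
          simp only [Function.comp]
          push_cast
          ring_nf
        rwa [h10] at h9
      have h7 := h8.mul_const (N.rnorm x₀ ω + η ω)
      rw [zero_mul] at h7
      have h11 := ENNReal.tendsto_ofReal h7
      simpa using h11
    calc N.asr y (T v) ω
        ≤ limsup (fun n => N.nrm (v - y n) ω +
            ENNReal.ofReal ((1/((n:ℝ)+2)) * (N.rnorm x₀ ω + η ω))) atTop :=
          limsup_le_limsup (Eventually.of_forall h)
      _ ≤ N.asr y v ω + limsup (fun n : ℕ =>
            ENNReal.ofReal ((1/((n:ℝ)+2)) * (N.rnorm x₀ ω + η ω))) atTop :=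
          mylimsup_add_le _ _
      _ = N.asr y v ω + 0 := by rw [h6.limsup_eq]
      _ = N.asr y v ω := add_zero _
  -- Step E : conclude that v is a fixed point
  have hkey0 : ∀ j : ℕ, μ {ω | ENNReal.ofReal (1/((j:ℝ)+1)) ≤ N.nrm (v - T v) ω ∧
      N.asr y v ω ⊔ N.asr y (T v) ω ≤ ρ ω + ENNReal.ofReal 0 ∧
      ρ ω ≤ ENNReal.ofReal ((j:ℝ)+1)} = 0 := by
    intro j
    have hεj : (0:ℝ) < 1/((j:ℝ)+1) := by positivity
    have hCj : (0:ℝ) < (j:ℝ)+1 := by positivity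
    obtain ⟨c, hc0, hc2, huc⟩ := N.uc_pair hruc hεj
      (show (0:ℝ) < ((j:ℝ)+1) + (1/((j:ℝ)+1))/2 + 2 by positivity)
    exact N.key_null hGconv y hρmeas hρle hvG (hTG v hvG) hεj hCj le_rfl zero_le_one
      (by positivity) hc0 hc2 huc
  have hzero : ∀ᵐ ω ∂μ, N.rnorm (v - T v) ω = 0 := by
    have hgood : ∀ᵐ ω ∂μ, (N.asr y v ω ⊔ N.asr y (T v) ω ≤ ρ ω) ∧ ρ ω ≠ ⊤ := by
      filter_upwards [hasrv, hTvle, hfin (U 0)] with ω h1 h2 h3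
      exact ⟨sup_le h1 (le_trans h2 h1), (lt_of_le_of_lt (hρleU 0 ω) h3).ne⟩
    have hnullU : μ (⋃ j : ℕ, {ω | ENNReal.ofReal (1/((j:ℝ)+1)) ≤ N.nrm (v - T v) ω ∧
        N.asr y v ω ⊔ N.asr y (T v) ω ≤ ρ ω + ENNReal.ofReal 0 ∧
        ρ ω ≤ ENNReal.ofReal ((j:ℝ)+1)}) = 0 := measure_iUnion_null hkey0
    have hae2 := measure_eq_zero_iff_ae_notMem.1 hnullU
    filter_upwards [hgood, hae2, N.rnorm_nonneg (v - T v)] with ω h1 h2 h3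
    by_contra hne
    have hpos : 0 < N.rnorm (v - T v) ω := lt_of_le_of_ne h3 (Ne.symm hne)
    obtain ⟨j1, hj1⟩ := exists_nat_one_div_lt hpos
    obtain ⟨j2, hj2⟩ := ENNReal.exists_nat_gt h1.2
    apply h2
    set jm : ℕ := max j1 j2 with hjm
    refine Set.mem_iUnion.2 ⟨jm, ?_, ?_, ?_⟩
    · have hc : (j1:ℝ) ≤ (jm:ℝ) := Nat.cast_le.2 (le_max_left _ _)
      have hle : 1/((jm:ℝ)+1) ≤ 1/((j1:ℝ)+1) :=
        one_div_le_one_div_of_le (by positivity) (by linarith)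
      show ENNReal.ofReal (1/((jm:ℝ)+1)) ≤ N.nrm (v - T v) ω
      exact ENNReal.ofReal_le_ofReal (le_trans hle hj1.le)
    · show N.asr y v ω ⊔ N.asr y (T v) ω ≤ ρ ω + ENNReal.ofReal 0
      rw [ENNReal.ofReal_zero, add_zero]
      exact h1.1
    · show ρ ω ≤ ENNReal.ofReal ((jm:ℝ)+1)
      have h4 : ρ ω ≤ (j2:ℝ≥0∞) := hj2.le
      have h5 : ((j2:ℝ≥0∞)) ≤ ENNReal.ofReal ((jm:ℝ)+1) := by
        rw [← ENNReal.ofReal_natCast j2]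
        refine ENNReal.ofReal_le_ofReal ?_
        have hc : (j2:ℝ) ≤ (jm:ℝ) := Nat.cast_le.2 (le_max_right _ _)
        linarith
      exact le_trans h4 h5
  have := N.rnorm_eq_zero (v - T v) hzero
  exact ⟨v, hvG, (sub_eq_zero.1 this).symm⟩



end RNModule
/-- Let `(E, ‖·‖)` be a complete random uniformly convex RN module (with full
support, as in the definition of random uniform convexity), `G` a closed `L⁰`-convex subset of
`E`, and `T : G → G` nonexpansive. If `G` is a.s. bounded then `T` has a fixed point; moreover
the same conclusion holds if only `T(G)` is assumed a.s. bounded. -/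
theorem stmt9
    {Ω E : Type*} [MeasurableSpace Ω] {μ : Measure Ω} [IsProbabilityMeasure μ]
    [AddCommGroup E] [Module (Ω → ℝ) E]
    (N : RNModule Ω μ E) (hcomp : N.Complete)
    (hfull : N.FullSupport) (hruc : N.RandomUniformlyConvex)
    (G : Set E) (hGne : G.Nonempty) (hGc : N.IsClosedSet G) (hGconv : N.L0Convex G)
    (T : E → E) (hTG : ∀ x ∈ G, T x ∈ G)
    (hTne : ∀ x ∈ G, ∀ y ∈ G, ∀ᵐ ω ∂μ, N.rnorm (T x - T y) ω ≤ N.rnorm (x - y) ω) :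
    (N.AeBounded G → ∃ x ∈ G, T x = x) ∧
    (N.AeBounded (T '' G) → ∃ x ∈ G, T x = x) := by
  constructor
  · intro hGb
    obtain ⟨η, hm, hb⟩ := hGb
    refine N.main_fixed hcomp hruc hGne hGc hGconv hTG hTne ⟨η, hm, ?_⟩
    rintro z ⟨x, hx, rfl⟩
    exact hb _ (hTG x hx)
  · intro hTb
    exact N.main_fixed hcomp hruc hGne hGc hGconv hTG hTne hTb
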